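/- Let a ≥ 2 be an integer and let w = φ^∞(0) be the fixed point of φ(n) = 0^{a−1}·(n+1) on ℕ. Then w is a/b-power-free for every pair of relatively prime positive integers a, b with b ≥ 1 and the same numerator a satisfying a/b ≥ 2. Equivalently, for every nonempty word v with b ∣ |v|, the a/b-power v^{a/b} is not a factor of w. -/

import Mathlib

/-!
An `a/b`-power `v^{a/b}` with `|v| = b c` occurring in `w` is a factor of length `a c` with
period `b c`. The nonzero letters of `w` sit exactly at the positions `≡ a - 1 (mod a)`, and the
factor is at least twice as long as its period, so `a ∣ b c`, hence `a ∣ c`. Erasing the zeros of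
the factor and subtracting one from the other letters gives a factor of `w` of length `c` with
period `b c / a`, i.e. a shorter `a/b`-power, and descent on `c` concludes.
-/

/-- The `a/b`-power of a word `v` (whose length should be divisible by `b`):
`⌊a/b⌋` copies of `v` followed by the prefix of `v` of length `|v|·(a mod b)/b`. -/
def abPow (a b : ℕ) (v : List ℕ) : List ℕ :=
  (List.replicate (a / b) v).flatten ++ v.take (v.length * (a % b) / b)

/-- `w` is an `a/b`-power. -/
def IsAbPower (a b : ℕ) (w : List ℕ) : Prop :=
  ∃ v : List ℕ, v ≠ [] ∧ b ∣ v.length ∧ w = abPow a b v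

/-- A finite word is `a/b`-power-free if none of its factors is an `a/b`-power. -/
def AbPowerFree (a b : ℕ) (w : List ℕ) : Prop :=
  ∀ f : List ℕ, f <:+: w → ¬ IsAbPower a b f

/-- `f` is a factor of the infinite word `w`. -/
def InfFactor (w : ℕ → ℕ) (f : List ℕ) : Prop :=
  ∃ i : ℕ, f = (List.range f.length).map fun j => w (i + j)

/-- An infinite word is `a/b`-power-free if none of its factors is an `a/b`-power. -/
def AbPowerFreeSeq (a b : ℕ) (w : ℕ → ℕ) : Prop :=
  ∀ f : List ℕ, InfFactor w f → ¬ IsAbPower a b f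

def HasPeriodOn (w : ℕ → ℕ) (p i L : ℕ) : Prop :=
  ∀ j, j + p < L → w (i + j) = w (i + j + p)

/-- `w` is the fixed point of the `a`-uniform morphism `φ(n) = 0^{a-1}(n+1)` on `ℕ`. -/
structure IsPhiFixedPoint (a : ℕ) (w : ℕ → ℕ) : Prop where
  eq_zero : ∀ i r, r ≤ a - 2 → w (a * i + r) = 0
  eq_succ : ∀ i, w (a * i + (a - 1)) = w i + 1

lemma getElem?_flatten_replicate_append_take {α : Type*} (v : List α) (q m : ℕ) {j : ℕ}
    (hj : j < q * v.length + min m v.length) :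
    ((List.replicate q v).flatten ++ v.take m)[j]? = v[j % v.length]? := by
  induction q generalizing j with
  | zero =>
    have hjv : j < v.length := by omega
    simp only [List.replicate_zero, List.flatten_nil, List.nil_append, List.getElem?_take,
      Nat.mod_eq_of_lt hjv]
    rw [if_pos (by omega)]
  | succ q ih =>
    rw [List.replicate_succ, List.flatten_cons, List.append_assoc]
    by_cases hjv : j < v.length
    · rw [List.getElem?_append_left hjv, Nat.mod_eq_of_lt hjv]
    · rw [List.getElem?_append_right (by omega), ih (by rw [Nat.succ_mul] at hj; omega),
        ← Nat.mod_eq_sub_mod (by omega)]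

section abPow

variable {a b : ℕ} {v : List ℕ}

lemma getElem?_abPow {j : ℕ} (hj : j < (abPow a b v).length) :
    (abPow a b v)[j]? = v[j % v.length]? :=
  getElem?_flatten_replicate_append_take v _ _ (by simpa [abPow] using hj)

lemma length_abPow (hb : 0 < b) {c : ℕ} (hc : v.length = b * c) :
    (abPow a b v).length = a * c := by
  have htake : v.length * (a % b) / b = c * (a % b) := by
    rw [hc, mul_assoc, Nat.mul_div_cancel_left _ hb]
  have hmod : c * (a % b) ≤ v.length := by
    rw [hc, mul_comm b]; exact Nat.mul_le_mul_left c (Nat.mod_lt a hb).le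
  simp only [abPow, List.length_append, List.length_flatten, List.map_replicate,
    List.sum_replicate, smul_eq_mul, List.length_take]
  rw [htake, min_eq_left hmod, hc]
  calc a / b * (b * c) + c * (a % b) = c * (b * (a / b) + a % b) := by ring
    _ = a * c := by rw [Nat.div_add_mod, mul_comm]

lemma InfFactor.exists_hasPeriodOn_abPow {w : ℕ → ℕ} (h : InfFactor w (abPow a b v)) :
    ∃ i, HasPeriodOn w v.length i (abPow a b v).length := by
  obtain ⟨i, hi⟩ := h
  have entry : ∀ k < (abPow a b v).length, (abPow a b v)[k]? = some (w (i + k)) := by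
    intro k hk
    rw [hi]
    simp [hk]
  refine ⟨i, fun j hj => Option.some.inj ?_⟩
  rw [← entry j (by omega), add_assoc, ← entry (j + v.length) (by omega),
    getElem?_abPow (by omega), getElem?_abPow (by omega), Nat.add_mod_right]

end abPow

namespace IsPhiFixedPoint

variable {a : ℕ} {w : ℕ → ℕ}

lemma mod_eq_of_ne_zero (hw : IsPhiFixedPoint a w) (ha : 0 < a) {p : ℕ} (hp : w p ≠ 0) :
    p % a = a - 1 := by
  by_contra hne
  apply hp
  rw [← Nat.div_add_mod p a]
  exact hw.eq_zero _ _ (by have := Nat.mod_lt p ha; omega)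

lemma dvd_of_ne_zero (hw : IsPhiFixedPoint a w) (ha : 0 < a) {p n : ℕ} (hp : w p ≠ 0)
    (hpn : w (p + n) ≠ 0) : a ∣ n := by
  have hmod : p ≡ p + n [MOD a] :=
    (hw.mod_eq_of_ne_zero ha hp).trans (hw.mod_eq_of_ne_zero ha hpn).symm
  simpa using (Nat.modEq_iff_dvd' (Nat.le_add_right p n)).mp hmod

lemma dvd_of_hasPeriodOn (hw : IsPhiFixedPoint a w) (ha : 0 < a) {n i L : ℕ}
    (hper : HasPeriodOn w n i L) (haL : a ≤ L) (hnL : 2 * n ≤ L) : a ∣ n := by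
  have hi := Nat.div_add_mod i a
  have hia := Nat.mod_lt i ha
  set j := a - 1 - i % a
  have hj : w (i + j) ≠ 0 := by
    rw [show i + j = a * (i / a) + (a - 1) by omega, hw.eq_succ]
    omega
  -- `j < a ≤ L` and `2 * n ≤ L`: the letter at `i + j` can be shifted by `n` forwards or backwards
  by_cases hjn : j + n < L
  · exact hw.dvd_of_ne_zero ha hj (hper j hjn ▸ hj)
  · have hshift : i + (j - n) + n = i + j := by omega
    have hper' := hper (j - n) (by omega)
    rw [hshift] at hper'
    exact hw.dvd_of_ne_zero ha (hper' ▸ hj) (hshift ▸ hj)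

/-- Desubstitution: the letters of the factor of length `a * c` at `i` in the positions
`a * q + (a - 1)` are those of the factor of length `c` at `i / a`, plus one. -/
lemma hasPeriodOn_div (hw : IsPhiFixedPoint a w) (ha : 0 < a) {k i c : ℕ}
    (hper : HasPeriodOn w (a * k) i (a * c)) : HasPeriodOn w k (i / a) c := by
  intro j hj
  have hi := Nat.div_add_mod i a
  have hia := Nat.mod_lt i ha
  have hbound : a * (j + k + 1) ≤ a * c := Nat.mul_le_mul_left a hj
  have key := hper (a - 1 - i % a + a * j) (by rw [mul_add, mul_add] at hbound; omega)
  rw [show i + (a - 1 - i % a + a * j) = a * (i / a + j) + (a - 1) by rw [mul_add]; omega,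
    show a * (i / a + j) + (a - 1) + a * k = a * (i / a + j + k) + (a - 1) by ring,
    hw.eq_succ, hw.eq_succ] at key
  omega

lemma not_hasPeriodOn (hw : IsPhiFixedPoint a w) {b : ℕ} (hb : 0 < b) (hab : a.Coprime b)
    (hba : 2 * b ≤ a) {c : ℕ} (hc : 0 < c) (i : ℕ) : ¬ HasPeriodOn w (b * c) i (a * c) := by
  induction c using Nat.strong_induction_on generalizing i with
  | _ c ih =>
  intro hper
  have ha : 0 < a := by omega
  have hdvd : a ∣ b * c :=
    hw.dvd_of_hasPeriodOn ha hper (Nat.le_mul_of_pos_right a hc) (by nlinarith)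
  obtain ⟨d, rfl⟩ := hab.dvd_of_dvd_mul_left hdvd
  have hd : 0 < d := Nat.pos_of_mul_pos_left hc
  refine ih d (lt_mul_left hd (by omega)) hd (i / a) (hw.hasPeriodOn_div ha ?_)
  rwa [mul_left_comm] at hper

end IsPhiFixedPoint

theorem fixedPoint_abPowerFree_large_general (a : ℕ) (w : ℕ → ℕ)
    (h0 : ∀ i r : ℕ, r ≤ a - 2 → w (a * i + r) = 0)
    (h1 : ∀ i : ℕ, w (a * i + (a - 1)) = w i + 1) :
    ∀ b : ℕ, 0 < b → Nat.Coprime a b → 2 * b ≤ a →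
      ∀ v : List ℕ, v ≠ [] → b ∣ v.length → ¬ InfFactor w (abPow a b v) := by
  rintro b hb hab hba v hv ⟨c, hc⟩ hfac
  obtain ⟨i, hper⟩ := hfac.exists_hasPeriodOn_abPow
  rw [length_abPow hb hc, hc] at hper
  have hc0 : 0 < c := Nat.pos_of_mul_pos_left (hc ▸ List.length_pos_iff.mpr hv)
  exact IsPhiFixedPoint.not_hasPeriodOn ⟨h0, h1⟩ hb hab hba hc0 i hper

theorem fixedPoint_abPowerFree_large (a : ℕ) (ha : 2 ≤ a) (w : ℕ → ℕ)
    (h0 : ∀ i r : ℕ, r ≤ a - 2 → w (a * i + r) = 0)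
    (h1 : ∀ i : ℕ, w (a * i + (a - 1)) = w i + 1) :
    ∀ b : ℕ, 0 < b → Nat.Coprime a b → 2 * b ≤ a →
      ∀ v : List ℕ, v ≠ [] → b ∣ v.length → ¬ InfFactor w (abPow a b v) :=
  fixedPoint_abPowerFree_large_general a w h0 h1
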